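/- arXiv:2603.22878 — 2 statements merged into one kernel-verified Lean document; each statement's English description precedes it below -/
import Mathlib

section
/- Let k ≥ 2 and write n = 1 + m(k+1) with m ≥ 0 an integer. Then L_n^{(k)} ≡ (4m+1)·(−1)^m (mod 2^{k−1}). -/
/-!
Subtracting the recurrence at `n` from the one at `n + 1` gives the two-term recurrence
`L (n + 1) = 2 L n - L (n - k)`, which steps by one and by `k + 1` at once. Along each progression
`j + 2 + m (k + 1)` with `j ≤ k - 2` it shows, by induction on `j` and then on `m`, that `2 ^ j`
divides every term: the progression starts just after `L (j + 2 - k)`, which lies in the block of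
zero initial values. Modulo `2 ^ (k - 1)` the recurrence then collapses to
`L ((m + 1)(k + 1)) ≡ -L (m(k + 1))` and `L (1 + (m + 1)(k + 1)) ≡ 2 L ((m + 1)(k + 1)) - L (1 + m(k + 1))`,
which solve to `2 (-1) ^ m` and `(4m + 1) (-1) ^ m`.
-/

open Finset

theorem eq_two_mul_sub_of_forall_eq_sum_range {R : Type*} [CommRing R] {k : ℕ} {f : ℤ → R}
    (hf : ∀ n, f n = ∑ i ∈ range k, f (n - 1 - i)) (n : ℤ) :
    f (n + 1) = 2 * f n - f (n - k) := by
  have hcur : f n = ∑ i ∈ range k, f (n - (i + 1 : ℕ)) := by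
    rw [hf n]
    refine sum_congr rfl fun i _ => congrArg f ?_
    push_cast
    ring
  have hnext : f (n + 1) = ∑ i ∈ range k, f (n - i) := by
    rw [hf (n + 1)]
    simp only [add_sub_cancel_right]
  have hsplit := (sum_range_succ' (fun i : ℕ => f (n - i)) k).symm.trans
    (sum_range_succ (fun i : ℕ => f (n - i)) k)
  simp only [Nat.cast_zero, sub_zero] at hsplit
  rw [← hcur, ← hnext] at hsplit
  linear_combination -hsplit

section KGeneralizedLucas

variable {k : ℕ} {L : ℤ → ℤ}

theorem two_pow_dvd_kLucas (hLneg : ∀ n : ℤ, 2 - (k : ℤ) ≤ n → n ≤ -1 → L n = 0)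
    (hLrec : ∀ n : ℤ, L n = ∑ i ∈ range k, L (n - 1 - (i : ℤ))) :
    ∀ j : ℕ, j + 2 ≤ k → ∀ m : ℕ, (2 : ℤ) ^ j ∣ L (j + 2 + m * (k + 1)) := by
  intro j
  induction j with
  | zero => simp
  | succ j ihj =>
    intro hj m
    induction m with
    | zero =>
      have hzero : L ((j : ℤ) + 2 - k) = 0 := hLneg _ (by omega) (by omega)
      rw [show ((j + 1 : ℕ) : ℤ) + 2 + ((0 : ℕ) : ℤ) * (k + 1) = (j + 2) + 1 by push_cast; ring,
        eq_two_mul_sub_of_forall_eq_sum_range hLrec, hzero, sub_zero, pow_succ']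
      exact mul_dvd_mul_left 2 (by simpa using ihj (by omega) 0)
    | succ p ihp =>
      rw [show ((j + 1 : ℕ) : ℤ) + 2 + ((p + 1 : ℕ) : ℤ) * (k + 1)
            = (j + 2 + (p + 1 : ℕ) * (k + 1)) + 1 by push_cast; ring,
        eq_two_mul_sub_of_forall_eq_sum_range hLrec,
        show (j : ℤ) + 2 + ((p + 1 : ℕ) : ℤ) * (k + 1) - k = ((j + 1 : ℕ) : ℤ) + 2 + p * (k + 1) by
          push_cast; ring,
        pow_succ']
      rw [pow_succ'] at ihp
      exact dvd_sub (mul_dvd_mul_left 2 (ihj (by omega) (p + 1))) ihp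

theorem kLucas_mul_modEq (hk : 2 ≤ k) (hL0 : L 0 = 2)
    (hLneg : ∀ n : ℤ, 2 - (k : ℤ) ≤ n → n ≤ -1 → L n = 0)
    (hLrec : ∀ n : ℤ, L n = ∑ i ∈ range k, L (n - 1 - (i : ℤ))) (m : ℕ) :
    L (m * (k + 1)) ≡ 2 * (-1) ^ m [ZMOD 2 ^ (k - 1)] := by
  induction m with
  | zero => simp [hL0]
  | succ m ih =>
    have hdvd : (2 : ℤ) ^ (k - 2) ∣ L (m * (k + 1) + k) := by
      have h := two_pow_dvd_kLucas hLneg hLrec (k - 2) (by omega) m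
      rwa [Nat.cast_sub hk, Nat.cast_ofNat, sub_add_cancel, add_comm] at h
    have heven : 2 * L (m * (k + 1) + k) ≡ 0 [ZMOD 2 ^ (k - 1)] := by
      rw [Int.modEq_zero_iff_dvd, show k - 1 = k - 2 + 1 by omega, pow_succ']
      exact mul_dvd_mul_left 2 hdvd
    rw [show ((m + 1 : ℕ) : ℤ) * (k + 1) = (m * (k + 1) + k) + 1 by push_cast; ring,
      eq_two_mul_sub_of_forall_eq_sum_range hLrec, add_sub_cancel_right, pow_succ]
    convert heven.sub ih using 1
    ring

theorem kLucas_one_add_mul_modEq (hk : 2 ≤ k) (hL0 : L 0 = 2) (hL1 : L 1 = 1)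
    (hLneg : ∀ n : ℤ, 2 - (k : ℤ) ≤ n → n ≤ -1 → L n = 0)
    (hLrec : ∀ n : ℤ, L n = ∑ i ∈ range k, L (n - 1 - (i : ℤ))) (m : ℕ) :
    L (1 + m * (k + 1)) ≡ (4 * m + 1) * (-1) ^ m [ZMOD 2 ^ (k - 1)] := by
  induction m with
  | zero => simp [hL1]
  | succ m ih =>
    rw [show 1 + ((m + 1 : ℕ) : ℤ) * (k + 1) = (m + 1 : ℕ) * (k + 1) + 1 by ring,
      eq_two_mul_sub_of_forall_eq_sum_range hLrec,
      show ((m + 1 : ℕ) : ℤ) * (k + 1) - k = 1 + m * (k + 1) by push_cast; ring]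
    convert ((kLucas_mul_modEq hk hL0 hLneg hLrec (m + 1)).mul_left 2).sub ih using 1
    push_cast
    ring

end KGeneralizedLucas

theorem stmt_7 (k : ℕ) (hk : 2 ≤ k) (L : ℤ → ℤ)
    (hL0 : L 0 = 2) (hL1 : L 1 = 1)
    (hLneg : ∀ n : ℤ, 2 - (k : ℤ) ≤ n → n ≤ -1 → L n = 0)
    (hLrec : ∀ n : ℤ, L n = ∑ i ∈ Finset.range k, L (n - 1 - (i : ℤ)))
    (m : ℕ) (n : ℤ) (hn : n = 1 + (m : ℤ) * ((k : ℤ) + 1)) :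
    L n ≡ (4 * (m : ℤ) + 1) * (-1) ^ m [ZMOD 2 ^ (k - 1)] := by
  subst hn
  exact kLucas_one_add_mul_modEq hk hL0 hL1 hLneg hLrec m
end

section
/- For all integers n ≥ 2 and k ≥ 2, L_n^{(k)} = 3·2^{n-2} + Σ_{j=1}^{⌊(n+1+k)/(k+1)⌋−1} 4·C_{n+1,j}·2^{n−j(k+1)−2} − Σ_{j=1}^{⌊(n+k)/(k+1)⌋−1} C_{n,j}·2^{n−j(k+1)−2}, where C_{n,j} := (−1)^j ( C(n−jk, j) − C(n−jk−2, j−2) ) with binomial coefficients taken to be 0 when out of range. -/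
/-- Binomial coefficient on integers, taken to be `0` when the lower index is
negative or exceeds the upper index. -/
def ichoose (a b : ℤ) : ℤ :=
  if 0 ≤ b ∧ b ≤ a then (a.toNat).choose b.toNat else 0

/-- The coefficient `C_{n,j} = (-1)^j (binom(n-jk, j) - binom(n-jk-2, j-2))`. -/
def Cnj (k n j : ℕ) : ℤ :=
  (-1) ^ j * (ichoose ((n : ℤ) - (j : ℤ) * k) j - ichoose ((n : ℤ) - (j : ℤ) * k - 2) ((j : ℤ) - 2))

/-!
Write `F m` (`cooperHoward k m`) for the Cooper–Howard closed form
`2^(m-2) + ∑ⱼ C_{m,j} 2^(m-j(k+1)-2)` of the `k`-generalized Fibonacci numbers; the right-hand side is `2 F (n+1) - F n`. Pascal's rule gives `C_{m+1,j+1} = C_{m,j+1} - C_{m-k,j}`, which becomes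
the recurrence `F (m+1) = 2 F m - F (m-k)` for `m ≥ k + 2` (the boundary exceptions of Pascal's
rule for `ichoose` and of the floor bound cancel there). Subtracting two consecutive instances
of the `k`-term recurrence shows that `L` satisfies the same two-term recurrence, so it remains to
compare the values for `2 ≤ n ≤ k + 2`.
-/

open Finset

lemma ichoose_of_neg {a b : ℤ} (h : b < 0) : ichoose a b = 0 :=
  if_neg (by omega)

lemma ichoose_of_lt {a b : ℤ} (h : a < b) : ichoose a b = 0 :=
  if_neg (by omega)

lemma ichoose_zero {a : ℤ} (h : 0 ≤ a) : ichoose a 0 = 1 := by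
  simp [ichoose, h]

lemma ichoose_self {a : ℤ} (h : 0 ≤ a) : ichoose a a = 1 := by
  simp [ichoose, h]

lemma ichoose_one {a : ℤ} (h : 0 ≤ a) : ichoose a 1 = a := by
  unfold ichoose
  split_ifs with h1
  · simp; omega
  · omega

lemma ichoose_add_one (a b : ℤ) :
    ichoose (a + 1) b = ichoose a b + ichoose a (b - 1) + if a = -1 ∧ b = 0 then 1 else 0 := by
  unfold ichoose
  split_ifs <;> try omega
  · rw [show (a + 1).toNat = a.toNat + 1 by omega, show b.toNat = (b - 1).toNat + 1 by omega,
      Nat.choose_succ_succ']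
    push_cast; ring
  · simp [show b = 0 by omega]
  · simp [show b = a + 1 by omega]
  · simp [show b = 0 by omega]

lemma Cnj_zero (k m : ℕ) : Cnj k m 0 = 1 := by
  simp [Cnj, ichoose_of_neg (show (-2 : ℤ) < 0 by norm_num), ichoose_zero]

lemma Cnj_one {k m : ℕ} (h : k ≤ m) : Cnj k m 1 = (k : ℤ) - m := by
  simp [Cnj, ichoose_of_neg (show (-1 : ℤ) < 0 by norm_num),
    ichoose_one (show (0 : ℤ) ≤ m - k by omega)]

lemma Cnj_eq_zero {k m j : ℕ} (hj : 1 ≤ j) (hm : m ≤ j * (k + 1))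
    (hne : ¬(j = 1 ∧ m = k + 1)) : Cnj k m j = 0 := by
  rcases hm.lt_or_eq with hlt | rfl
  · have : (m : ℤ) < j * k + j := by nlinarith
    simp [Cnj, ichoose_of_lt (show (m : ℤ) - j * k < j by omega),
      ichoose_of_lt (show (m : ℤ) - j * k - 2 < j - 2 by omega)]
  · have hj2 : 2 ≤ j := by
      by_contra hj2
      exact hne ⟨by omega, by rw [show j = 1 by omega, one_mul]⟩
    have h1 : ((j * (k + 1) : ℕ) : ℤ) - j * k = j := by push_cast; ring
    rw [Cnj, h1, ichoose_self (by omega), ichoose_self (by omega), sub_self, mul_zero]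

lemma Cnj_succ_succ {k m : ℕ} (j : ℕ) (h : k ≤ m) :
    Cnj k (m + 1) (j + 1) =
      Cnj k m (j + 1) - Cnj k (m - k) j - if j = 1 ∧ m = 2 * k + 1 then 1 else 0 := by
  set a : ℤ := m - (j + 1) * k with ha
  have e1 : ((m + 1 : ℕ) : ℤ) - ((j + 1 : ℕ) : ℤ) * k = a + 1 := by push_cast; ring
  have e2 : ((m + 1 : ℕ) : ℤ) - ((j + 1 : ℕ) : ℤ) * k - 2 = (a - 2) + 1 := by push_cast; ring
  have e3 : ((m : ℕ) : ℤ) - ((j + 1 : ℕ) : ℤ) * k = a := by push_cast; ring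
  have e4 : ((m - k : ℕ) : ℤ) - (j : ℤ) * k = a := by rw [Nat.cast_sub h]; ring
  rw [Cnj, Cnj, Cnj, e2, e1, e3, e4, ichoose_add_one, ichoose_add_one,
    show ((j + 1 : ℕ) : ℤ) - 1 = j by push_cast; ring,
    show ((j + 1 : ℕ) : ℤ) - 2 - 1 = j - 2 by push_cast; ring, if_neg (by omega)]
  have hexc : (a - 2 = -1 ∧ ((j + 1 : ℕ) : ℤ) - 2 = 0) ↔ (j = 1 ∧ m = 2 * k + 1) := by
    constructor
    · rintro ⟨h1, h2⟩
      obtain rfl : j = 1 := by omega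
      omega
    · rintro ⟨rfl, rfl⟩
      refine ⟨?_, by norm_num⟩
      push_cast at ha
      omega
  simp only [hexc]
  split_ifs with hc
  · obtain ⟨rfl, -⟩ := hc
    ring
  · ring

def cnjSum (k m : ℕ) : ℚ :=
  ∑ j ∈ range (m + 1), (Cnj k m j : ℚ) * 2 ^ ((m : ℤ) - j * (k + 1) - 2)

def cooperHoward (k m : ℕ) : ℚ :=
  2 ^ ((m : ℤ) - 2) +
    ∑ j ∈ Icc 1 ((m + k) / (k + 1) - 1), (Cnj k m j : ℚ) * 2 ^ ((m : ℤ) - j * (k + 1) - 2)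

lemma cnjSum_eq_sum_range {k m N : ℕ} (hN : m < N) :
    cnjSum k m = ∑ j ∈ range N, (Cnj k m j : ℚ) * 2 ^ ((m : ℤ) - j * (k + 1) - 2) := by
  refine sum_subset (range_subset_range.2 hN) fun j hjN hjm => ?_
  simp only [mem_range, not_lt] at hjN hjm
  rw [Cnj_eq_zero (by omega) (by nlinarith) (by omega), Int.cast_zero, zero_mul]

lemma cnjSum_succ {k m : ℕ} (h : k ≤ m) :
    cnjSum k (m + 1) = 2 * cnjSum k m - cnjSum k (m - k) - if m = 2 * k + 1 then 1 / 4 else 0 := by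
  have hterm : ∀ j : ℕ,
      (Cnj k (m + 1) (j + 1) : ℚ) * 2 ^ (((m + 1 : ℕ) : ℤ) - (j + 1 : ℕ) * (k + 1) - 2)
      = 2 * ((Cnj k m (j + 1) : ℚ) * 2 ^ ((m : ℤ) - (j + 1 : ℕ) * (k + 1) - 2))
        - (Cnj k (m - k) j : ℚ) * 2 ^ (((m - k : ℕ) : ℤ) - j * (k + 1) - 2)
        - if j = 1 ∧ m = 2 * k + 1 then 1 / 4 else 0 := by
    intro j
    have e1 : ((m + 1 : ℕ) : ℤ) - (j + 1 : ℕ) * (k + 1) - 2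
        = ((m : ℤ) - (j + 1 : ℕ) * (k + 1) - 2) + 1 := by
      push_cast; ring
    have e2 : ((m - k : ℕ) : ℤ) - j * (k + 1) - 2
        = ((m : ℤ) - (j + 1 : ℕ) * (k + 1) - 2) + 1 := by
      push_cast [h]; ring
    rw [Cnj_succ_succ j h, e1, e2, zpow_add_one₀ two_ne_zero]
    split_ifs with hc
    · obtain ⟨rfl, rfl⟩ := hc
      rw [show ((2 * k + 1 : ℕ) : ℤ) - (1 + 1 : ℕ) * (k + 1) - 2 = -3 by push_cast; ring]
      push_cast
      ring
    · push_cast; ring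
  have hexc : ∑ j ∈ range (m + 1), (if j = 1 ∧ m = 2 * k + 1 then (1 / 4 : ℚ) else 0)
      = if m = 2 * k + 1 then 1 / 4 else 0 := by
    split_ifs with hm
    · simp [hm]
    · simp [hm]
  have hA : 2 * cnjSum k m =
      ∑ j ∈ range (m + 1), 2 * ((Cnj k m (j + 1) : ℚ) * 2 ^ ((m : ℤ) - (j + 1 : ℕ) * (k + 1) - 2))
        + 2 ^ ((m : ℤ) - 1) := by
    rw [cnjSum_eq_sum_range (N := m + 2) (by omega), sum_range_succ', mul_add, mul_sum,
      Cnj_zero, show (m : ℤ) - 1 = (m : ℤ) - (0 : ℕ) * (k + 1) - 2 + 1 by push_cast; ring,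
      zpow_add_one₀ two_ne_zero]
    push_cast
    ring
  rw [cnjSum, sum_range_succ', hA, cnjSum_eq_sum_range (m := m - k) (N := m + 1) (by omega)]
  simp only [hterm, sum_sub_distrib, hexc, Cnj_zero]
  push_cast
  rw [show (m : ℤ) + 1 - 0 * (k + 1) - 2 = m - 1 by ring]
  ring

-- The floor bound only drops vanishing terms, except the term `C_{k+1,1} 2^(-2) = -1/4`.
lemma cooperHoward_eq_cnjSum (k m : ℕ) :
    cooperHoward k m = cnjSum k m + if m = k + 1 then 1 / 4 else 0 := by
  set f : ℕ → ℚ := fun j => (Cnj k m j : ℚ) * 2 ^ ((m : ℤ) - j * (k + 1) - 2) with hf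
  have hsplit : cnjSum k m = 2 ^ ((m : ℤ) - 2) + ∑ j ∈ Ico 1 (m + 1), f j := by
    rw [cnjSum, range_eq_Ico, sum_eq_sum_Ico_succ_bot (by omega)]
    simp [hf, Cnj_zero]
  rw [cooperHoward, hsplit, add_assoc]
  congr 1
  split_ifs with hm
  · subst hm
    rw [show (k + 1 + k) / (k + 1) - 1 = 0 by
        rw [Nat.sub_eq_zero_iff_le, Nat.div_le_iff_le_mul_add_pred (by omega)]; omega,
      Icc_eq_empty (by omega), sum_empty,
      sum_eq_single_of_mem 1 (by simp) fun j hj hj1 => ?_]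
    · norm_num [hf, Cnj_one]
    · simp only [mem_Ico] at hj
      simp only [hf]
      rw [Cnj_eq_zero (by omega) (by nlinarith) fun h => hj1 h.1, Int.cast_zero, zero_mul]
  · have hq : (m + k) / (k + 1) ≤ m + 1 := Nat.div_le_of_le_mul (by nlinarith)
    rw [add_zero]
    refine sum_subset (fun j hj => ?_) fun j hj hjq => ?_
    · simp only [mem_Icc, mem_Ico] at hj ⊢
      omega
    · simp only [mem_Icc, mem_Ico, not_and, not_le] at hj hjq
      have hjm : (m + k) / (k + 1) ≤ j := by omega
      rw [Nat.div_le_iff_le_mul_add_pred (by omega), Nat.add_sub_cancel] at hjm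
      rw [Cnj_eq_zero hj.1 (by linarith [Nat.mul_comm j (k + 1)]) (by omega), Int.cast_zero,
        zero_mul]

lemma cooperHoward_succ {k m : ℕ} (h : k + 2 ≤ m) :
    cooperHoward k (m + 1) = 2 * cooperHoward k m - cooperHoward k (m - k) := by
  rw [cooperHoward_eq_cnjSum, cooperHoward_eq_cnjSum, cooperHoward_eq_cnjSum,
    cnjSum_succ (by omega)]
  split_ifs <;> first | omega | ring

lemma cooperHoward_add_two_of_le {k i : ℕ} (h : i + 1 ≤ k) : cooperHoward k (i + 2) = 2 ^ i := by
  rw [cooperHoward, Icc_eq_empty, sum_empty, add_zero]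
  · push_cast
    rw [add_sub_cancel_right, zpow_natCast]
  · have : (i + 2 + k) / (k + 1) < 2 := by
      rw [Nat.div_lt_iff_lt_mul (by omega)]
      omega
    omega

lemma cooperHoward_add_two (k : ℕ) : cooperHoward k (k + 2) = 2 ^ k - 1 := by
  rw [cooperHoward, show k + 2 + k = (k + 1) * 2 by ring, Nat.mul_div_cancel_left _ (by omega),
    Icc_self, sum_singleton, Cnj_one (by omega)]
  push_cast
  rw [show (k : ℤ) + 2 - 2 = k by ring, show (k : ℤ) + 2 - 1 * (k + 1) - 2 = -1 by ring,
    zpow_natCast]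
  norm_num
  ring

lemma two_mul_cooperHoward_succ_sub (k n : ℕ) :
    2 * cooperHoward k (n + 1) - cooperHoward k n =
      3 * (2 : ℚ) ^ ((n : ℤ) - 2)
        + ∑ j ∈ Icc 1 ((n + 1 + k) / (k + 1) - 1),
            4 * (Cnj k (n + 1) j : ℚ) * (2 : ℚ) ^ ((n : ℤ) - (j : ℤ) * ((k : ℤ) + 1) - 2)
        - ∑ j ∈ Icc 1 ((n + k) / (k + 1) - 1),
            (Cnj k n j : ℚ) * (2 : ℚ) ^ ((n : ℤ) - (j : ℤ) * ((k : ℤ) + 1) - 2) := by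
  have hsucc : ∀ e : ℤ, (2 : ℚ) ^ (e + 1) = 2 * 2 ^ e := fun e => by
    rw [zpow_add_one₀ two_ne_zero, mul_comm]
  have hterm : ∀ j : ℕ, 2 * ((Cnj k (n + 1) j : ℚ) * 2 ^ (((n + 1 : ℕ) : ℤ) - j * (k + 1) - 2)) =
      4 * (Cnj k (n + 1) j : ℚ) * 2 ^ ((n : ℤ) - j * (k + 1) - 2) := fun j => by
    rw [show ((n + 1 : ℕ) : ℤ) - j * (k + 1) - 2 = ((n : ℤ) - j * (k + 1) - 2) + 1 by
      push_cast; ring, hsucc]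
    ring
  rw [cooperHoward, cooperHoward, mul_add, mul_sum, sum_congr rfl fun j _ => hterm j,
    show ((n + 1 : ℕ) : ℤ) - 2 = ((n : ℤ) - 2) + 1 by push_cast; ring, hsucc]
  ring

lemma eq_two_mul_sub_of_eq_sum_range {R : Type*} [CommRing R] {k : ℕ} (hk : 0 < k) {L : ℤ → R}
    (h : ∀ n : ℤ, L n = ∑ i ∈ range k, L (n - 1 - i)) (z : ℤ) :
    L z = 2 * L (z - 1) - L (z - 1 - k) := by
  obtain ⟨m, rfl⟩ : ∃ m, k = m + 1 := ⟨k - 1, by omega⟩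
  have h1 := h z
  have h2 := h (z - 1)
  rw [sum_range_succ'] at h1
  rw [sum_range_succ] at h2
  have hshift : ∑ i ∈ range m, L (z - 1 - (i + 1 : ℕ)) = ∑ i ∈ range m, L (z - 1 - 1 - i) :=
    sum_congr rfl fun i _ => by push_cast; ring_nf
  rw [hshift] at h1
  push_cast at h1 h2 ⊢
  rw [sub_zero] at h1
  rw [show z - 1 - (m + 1) = z - 1 - 1 - m by ring]
  linear_combination h1 - h2

lemma eq_of_eq_on_Icc_of_recurrence {α : Type*} (f : α → α → α) {a k : ℕ} {X Y : ℕ → α}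
    (hX : ∀ n, a ≤ n → X (n + k + 1) = f (X (n + k)) (X n))
    (hY : ∀ n, a ≤ n → Y (n + k + 1) = f (Y (n + k)) (Y n))
    (hbase : ∀ n, a ≤ n → n ≤ a + k → X n = Y n) : ∀ n, a ≤ n → X n = Y n := by
  intro n
  induction n using Nat.strong_induction_on with
  | _ n ih =>
    intro hn
    by_cases hnk : n ≤ a + k
    · exact hbase n hn hnk
    · obtain ⟨m, rfl⟩ : ∃ m, n = m + k + 1 := ⟨n - k - 1, by omega⟩
      rw [hX m (by omega), hY m (by omega), ih (m + k) (by omega) (by omega),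
        ih m (by omega) (by omega)]

section Lucas

variable {k : ℕ} {L : ℤ → ℤ}

lemma lucas_eq_three_mul_two_pow (hL0 : L 0 = 2) (hL1 : L 1 = 1)
    (hLneg : ∀ n : ℤ, 2 - (k : ℤ) ≤ n → n ≤ -1 → L n = 0)
    (hLrec : ∀ n : ℤ, L n = ∑ i ∈ range k, L (n - 1 - i)) {i : ℕ} (hi : i + 2 ≤ k) :
    L (i + 2) = 3 * 2 ^ i := by
  induction i with
  | zero =>
    obtain ⟨m, rfl⟩ : ∃ m, k = m + 2 := ⟨k - 2, by omega⟩
    rw [hLrec, sum_range_succ', sum_range_succ', sum_eq_zero fun i hi => hLneg _ ?_ ?_]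
    · norm_num [hL0, hL1]
    all_goals simp only [mem_range] at hi; push_cast; omega
  | succ i ih =>
    rw [eq_two_mul_sub_of_eq_sum_range (by omega) hLrec,
      hLneg ((i + 1 : ℕ) + 2 - 1 - k) (by omega) (by omega)]
    push_cast
    rw [show (i : ℤ) + 1 + 2 - 1 = i + 2 by ring, ih (by omega), pow_succ]
    ring

lemma lucas_eq_two_mul_cooperHoward_succ_sub_of_le (hk : 2 ≤ k)
    (hL0 : L 0 = 2) (hL1 : L 1 = 1) (hLneg : ∀ n : ℤ, 2 - (k : ℤ) ≤ n → n ≤ -1 → L n = 0)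
    (hLrec : ∀ n : ℤ, L n = ∑ i ∈ range k, L (n - 1 - i)) {n : ℕ} (hn : 2 ≤ n) (hnk : n ≤ k + 2) :
    (L n : ℚ) = 2 * cooperHoward k (n + 1) - cooperHoward k n := by
  have hsmall : ∀ i, i + 2 ≤ k → L (i + 2) = 3 * 2 ^ i := fun i hi =>
    lucas_eq_three_mul_two_pow hL0 hL1 hLneg hLrec hi
  have hrec := eq_two_mul_sub_of_eq_sum_range (by omega) hLrec
  obtain ⟨c, rfl⟩ : ∃ c, k = c + 2 := ⟨k - 2, by omega⟩
  obtain ⟨i, rfl⟩ : ∃ i, n = i + 2 := ⟨n - 2, by omega⟩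
  have hL3 : L (c + 3) = 3 * 2 ^ (c + 1) - 2 := by
    rw [hrec, show (c : ℤ) + 3 - 1 = c + 2 by ring, hsmall c (by omega),
      show (c : ℤ) + 2 - ((c + 2 : ℕ) : ℤ) = 0 by push_cast; ring, hL0, pow_succ]
    ring
  rcases (show i ≤ c ∨ i = c + 1 ∨ i = c + 2 by omega) with hi | rfl | rfl
  · rw [cooperHoward_add_two_of_le (i := i + 1) (by omega), cooperHoward_add_two_of_le (by omega)]
    push_cast
    rw [hsmall i (by omega)]
    push_cast; ring
  · rw [cooperHoward_add_two, cooperHoward_add_two_of_le (by omega)]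
    push_cast
    rw [show (c : ℤ) + 1 + 2 = c + 3 by ring, hL3]
    push_cast; ring
  · rw [cooperHoward_succ (by omega), show c + 2 + 2 - (c + 2) = 0 + 2 by omega,
      cooperHoward_add_two, cooperHoward_add_two_of_le (by omega), hrec]
    push_cast
    rw [show (c : ℤ) + 2 + 2 - 1 = c + 3 by ring, hL3,
      show (c : ℤ) + 3 - (c + 2) = 1 by ring, hL1]
    push_cast; ring

end Lucas

theorem stmt_10 (k : ℕ) (hk : 2 ≤ k) (L : ℤ → ℤ)
    (hL0 : L 0 = 2) (hL1 : L 1 = 1)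
    (hLneg : ∀ n : ℤ, 2 - (k : ℤ) ≤ n → n ≤ -1 → L n = 0)
    (hLrec : ∀ n : ℤ, L n = ∑ i ∈ Finset.range k, L (n - 1 - (i : ℤ))) :
    ∀ n : ℕ, 2 ≤ n →
      (L n : ℚ) = 3 * (2 : ℚ) ^ ((n : ℤ) - 2)
        + ∑ j ∈ Finset.Icc 1 ((n + 1 + k) / (k + 1) - 1),
            4 * (Cnj k (n + 1) j : ℚ) * (2 : ℚ) ^ ((n : ℤ) - (j : ℤ) * ((k : ℤ) + 1) - 2)
        - ∑ j ∈ Finset.Icc 1 ((n + k) / (k + 1) - 1),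
            (Cnj k n j : ℚ) * (2 : ℚ) ^ ((n : ℤ) - (j : ℤ) * ((k : ℤ) + 1) - 2) := by
  intro n hn
  rw [← two_mul_cooperHoward_succ_sub]
  have hLrecℚ : ∀ z : ℤ, (L z : ℚ) = ∑ i ∈ range k, (L (z - 1 - i) : ℚ) := fun z => by
    rw [hLrec z, Int.cast_sum]
  refine eq_of_eq_on_Icc_of_recurrence (fun x y => 2 * x - y) (a := 2) (k := k)
    (X := fun n => (L n : ℚ)) (Y := fun n => 2 * cooperHoward k (n + 1) - cooperHoward k n)
    (fun m _ => ?_) (fun m hm => ?_) (fun m hm hmk => ?_) n hn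
  · rw [eq_two_mul_sub_of_eq_sum_range (L := fun z => (L z : ℚ)) (by omega) hLrecℚ]
    push_cast
    ring_nf
  · rw [cooperHoward_succ (by omega), cooperHoward_succ (m := m + k) (by omega),
      show m + k + 1 - k = m + 1 by omega, show m + k - k = m by omega]
    ring
  · exact lucas_eq_two_mul_cooperHoward_succ_sub_of_le hk hL0 hL1 hLneg hLrec hm (by omega)
end
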